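/- arXiv:2004.00148 — 6 statements merged into one kernel-verified Lean document; each statement's English description precedes it below -/
import Mathlib

section
/- Let p ≥ 5 be odd, and define n_k = ((p-1)/2 · ⌊k/(p-3)⌋ + a_k) mod p + 1, where a_k is as defined. If n_k = n_{k'} and |a_{k'} - a_k| < p, then ⌊k'/(p-3)⌋ ≡ ⌊k/(p-3)⌋ + 2(a_{k'} - a_k) (mod p), provided 0 ≤ ⌊k/(p-3)⌋, ⌊k'/(p-3)⌋ ≤ p-1. -/
theorem ZMod.two_mul_natCast_half_pred {p : ℕ} (hodd : Odd p) :
    (2 : ZMod p) * ((p - 1) / 2 : ℕ) = -1 := by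
  obtain ⟨m, rfl⟩ := hodd
  have hhalf : (2 * m + 1 - 1) / 2 = m := by omega
  rw [hhalf, ← sub_eq_zero]
  simpa [add_comm] using ZMod.natCast_self (2 * m + 1)

theorem eq_add_two_mul_sub_of_mul_add_eq {R : Type*} [CommRing R] {c b b' x y : R}
    (hc : 2 * c = -1) (h : c * b + x = c * b' + y) : b' = b + 2 * (y - x) := by
  linear_combination 2 * h + (b' - b) * hc

theorem block_index_congruence_general (p : ℕ) (hodd : Odd p)
    (a : ℕ → ℕ)
    (n : ℕ → ℕ)
    (hn : ∀ k, n k = ((p - 1) / 2 * (k / (p - 3)) + a k) % p + 1)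
    (k k' : ℕ) (hnk : n k = n k') :
    ((k' / (p - 3) : ℕ) : ℤ) ≡
      ((k / (p - 3) : ℕ) : ℤ) + 2 * ((a k' : ℤ) - (a k : ℤ)) [ZMOD (p : ℕ)] := by
  have hmod :
      (p - 1) / 2 * (k / (p - 3)) + a k ≡ (p - 1) / 2 * (k' / (p - 3)) + a k' [MOD p] := by
    rw [hn, hn] at hnk
    exact Nat.add_right_cancel hnk
  have hcast := (ZMod.natCast_eq_natCast_iff _ _ _).mpr hmod
  rw [← ZMod.intCast_eq_intCast_iff]
  simp only [Nat.cast_add, Nat.cast_mul] at hcast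
  simp only [Int.cast_add, Int.cast_mul, Int.cast_sub, Int.cast_natCast, Int.cast_ofNat]
  exact eq_add_two_mul_sub_of_mul_add_eq (ZMod.two_mul_natCast_half_pred hodd) hcast

/-- Lemma 1: if n_k = n_{k'} then the petal-block indices satisfy
⌊k'/(p-3)⌋ ≡ ⌊k/(p-3)⌋ + 2(a_{k'} - a_k) (mod p). -/
theorem block_index_congruence (p : ℕ) (hodd : Odd p) (hp : 5 ≤ p)
    (a : ℕ → ℕ)
    (ha : ∀ k, a k = if k % (p - 3) < (p - 3) / 2 then 0
      else (k % (p - 3)) - (p - 3) / 2 + 1)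
    (n : ℕ → ℕ)
    (hn : ∀ k, n k = ((p - 1) / 2 * (k / (p - 3)) + a k) % p + 1)
    (k k' : ℕ) (hnk : n k = n k')
    (habs : |(a k' : ℤ) - (a k : ℤ)| < p)
    (hbk : k / (p - 3) ≤ p - 1) (hbk' : k' / (p - 3) ≤ p - 1) :
    ((k' / (p - 3) : ℕ) : ℤ) ≡
      ((k / (p - 3) : ℕ) : ℤ) + 2 * ((a k' : ℤ) - (a k : ℤ)) [ZMOD (p : ℕ)] :=
  block_index_congruence_general p hodd a n hn k k' hnk
end

section
/- Let p ≥ 5 be odd. The unsigned Gauss code c : {0,...,p(p-3)-1} → {1,...,p(p-3)/2} given by c_k = p·L_k + n_k is exactly two-to-one: every value in {1,...,p(p-3)/2} is attained by exactly two indices k. -/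
/-!
Write `k = (p - 3) q + r` with `q < p` and `r < p - 3`. Then `c k - 1` has the two base-`p` digits
`L r` and `((p - 1) / 2 * q + a r) % p`. As `(p - 1) / 2` is invertible modulo `p`, for each `r`
exactly one `q` produces the required low digit, so `c k = m` has as many solutions as there are
`r < p - 3` with `min r (p - 4 - r) = ℓ := (m - 1) / p`, namely `r = ℓ` and `r = p - 4 - ℓ`, which
differ because `ℓ < (p - 3) / 2`.
-/

open Finset

theorem sum_range_mul_eq_sum_sum {M : Type*} [AddCommMonoid M] (f : ℕ → M) (a b : ℕ) :
    ∑ k ∈ range (a * b), f k = ∑ r ∈ range b, ∑ q ∈ range a, f (b * q + r) := by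
  rw [sum_comm]
  induction a with
  | zero => simp
  | succ a ih => rw [add_mul, one_mul, sum_range_add, ih, sum_range_succ, mul_comm a]

theorem card_filter_range_mul_eq_sum {P : ℕ → Prop} [DecidablePred P] (a b : ℕ) :
    #{k ∈ range (a * b) | P k} = ∑ r ∈ range b, #{q ∈ range a | P (b * q + r)} := by
  simp only [card_filter, sum_range_mul_eq_sum_sum _ a b]

theorem card_filter_range_mul_add_mod_eq {b p : ℕ} (hb : b.Coprime p) (x : ℕ) {ν : ℕ}
    (hν : ν < p) : #{q ∈ range p | (b * q + x) % p = ν} = 1 := by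
  set f : ℕ → ℕ := fun q => (b * q + x) % p
  have hinj : Set.InjOn f (range p) := fun q₁ h₁ q₂ h₂ h =>
    ((Nat.ModEq.add_right_cancel' x h).cancel_left_of_coprime hb.symm).eq_of_lt_of_lt
      (mem_range.1 h₁) (mem_range.1 h₂)
  have hsurj : (range p).image f = range p :=
    eq_of_subset_of_card_le (image_subset_iff.2 fun q _ => mem_range.2 (Nat.mod_lt _ (by omega)))
      (card_image_of_injOn hinj).ge
  obtain ⟨q₀, hq₀, rfl⟩ := mem_image.1 (hsurj ▸ mem_range.2 hν)
  refine card_eq_one.2 ⟨q₀, ext fun q => ?_⟩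
  simp only [mem_filter, mem_singleton]
  exact ⟨fun ⟨hq, h⟩ => hinj hq hq₀ h, by rintro rfl; exact ⟨hq₀, rfl⟩⟩

theorem mul_add_add_one_eq_iff {p L x m : ℕ} (hx : x < p) (hm : 1 ≤ m) :
    p * L + x + 1 = m ↔ L = (m - 1) / p ∧ x = (m - 1) % p := by
  rw [eq_comm (a := L), eq_comm (a := x), Nat.div_mod_unique (by omega)]
  omega

theorem card_filter_range_mul_add_mod_add_one_eq {b p : ℕ} (hp : 0 < p) (hb : b.Coprime p)
    (L x : ℕ) {m : ℕ} (hm : 1 ≤ m) :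
    #{q ∈ range p | p * L + (b * q + x) % p + 1 = m} = if L = (m - 1) / p then 1 else 0 := by
  simp only [mul_add_add_one_eq_iff (Nat.mod_lt _ hp) hm]
  split_ifs with hL
  · simpa only [hL, true_and, eq_comm] using
      card_filter_range_mul_add_mod_eq hb x (Nat.mod_lt (m - 1) hp)
  · simp [hL]

theorem card_filter_range_min_sub_eq {N ℓ : ℕ} (h : 2 * ℓ + 2 ≤ N) :
    #{r ∈ range N | min r (N - 1 - r) = ℓ} = 2 := by
  have : {r ∈ range N | min r (N - 1 - r) = ℓ} = {ℓ, N - 1 - ℓ} := by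
    ext r; simp only [mem_filter, mem_range, mem_insert, mem_singleton]; omega
  rw [this, card_pair (by omega)]

/-- The petal unsigned Gauss code c_k = p·L_k + n_k is exactly two-to-one onto
{1, ..., p(p-3)/2}. -/
theorem gauss_code_two_to_one (p : ℕ) (hodd : Odd p) (hp : 5 ≤ p)
    (L : ℕ → ℕ) (hL : ∀ k, L k = min (k % (p - 3)) ((p - 4) - k % (p - 3)))
    (a : ℕ → ℕ)
    (ha : ∀ k, a k = if k % (p - 3) < (p - 3) / 2 then 0
      else (k % (p - 3)) - (p - 3) / 2 + 1)
    (n : ℕ → ℕ)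
    (hn : ∀ k, n k = ((p - 1) / 2 * (k / (p - 3)) + a k) % p + 1)
    (c : ℕ → ℕ) (hc : ∀ k, c k = p * L k + n k)
    (m : ℕ) (hm1 : 1 ≤ m) (hm2 : m ≤ p * (p - 3) / 2) :
    ((Finset.range (p * (p - 3))).filter (fun k => c k = m)).card = 2 := by
  have hhalf : 2 * ((p - 1) / 2) = p - 1 := by obtain ⟨t, rfl⟩ := hodd; omega
  have hcoprime : ((p - 1) / 2).Coprime p :=
    Nat.Coprime.coprime_mul_left <|
      hhalf ▸ (Nat.coprime_self_sub_left (by omega)).2 (Nat.coprime_one_left p)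
  have hcode : ∀ q r, r < p - 3 →
      c ((p - 3) * q + r) = p * L r + ((p - 1) / 2 * q + a r) % p + 1 := by
    intro q r hr
    have hdiv : ((p - 3) * q + r) / (p - 3) = q := by
      rw [Nat.mul_add_div (by omega), Nat.div_eq_of_lt hr, add_zero]
    have hmod : ((p - 3) * q + r) % (p - 3) = r := by
      rw [Nat.mul_add_mod, Nat.mod_eq_of_lt hr]
    rw [hc, hL, hL r, hn, ha, ha r, hdiv, hmod, Nat.mod_eq_of_lt hr, add_assoc]
  have hlevel : 2 * ((m - 1) / p) + 2 ≤ p - 3 := by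
    have hm : m - 1 < p * ((p - 3) / 2) := by
      rw [← Nat.mul_div_assoc _ (by obtain ⟨t, rfl⟩ := hodd; omega)]; omega
    have hℓ := (Nat.div_lt_iff_lt_mul (by omega)).2 (mul_comm p _ ▸ hm)
    obtain ⟨t, rfl⟩ := hodd; omega
  rw [card_filter_range_mul_eq_sum]
  calc ∑ r ∈ range (p - 3), #{q ∈ range p | c ((p - 3) * q + r) = m}
      = ∑ r ∈ range (p - 3), if min r (p - 3 - 1 - r) = (m - 1) / p then 1 else 0 := by
        refine sum_congr rfl fun r hr => ?_
        rw [filter_congr fun q _ => by rw [hcode q r (mem_range.1 hr)],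
          card_filter_range_mul_add_mod_add_one_eq (by omega) hcoprime _ _ hm1, hL,
          Nat.mod_eq_of_lt (mem_range.1 hr), show p - 4 = p - 3 - 1 by omega]
    _ = 2 := by rw [← card_filter, card_filter_range_min_sub_eq hlevel]
end

section
/- Let p ≥ 5 be odd and let k, k' be indices with k ≠ k' such that both L_k = L_{k'} and n_k = n_{k'} (i.e., c_k = c_{k'} in the unsigned Gauss code). Then (k mod (p-3)) + (k' mod (p-3)) = p - 4. -/
/-!
Equal labels `L k = L k'` mean the remainders `r, r'` of `k, k'` modulo `p - 3` are either equal or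
reflections of each other (`r + r' = p - 4`). If they were equal, then `a k = a k'`, so `n k = n k'`
says `(p - 1) / 2 * (k / (p - 3)) ≡ (p - 1) / 2 * (k' / (p - 3)) [MOD p]`. For odd `p` the factor
`(p - 1) / 2` is a unit mod `p`, and both quotients are `< p`, so they agree and `k = k'`.
-/

theorem Nat.eq_or_add_eq_of_min_tsub_eq {N r r' : ℕ} (hr : r ≤ N) (hr' : r' ≤ N)
    (h : min r (N - r) = min r' (N - r')) : r = r' ∨ r + r' = N := by
  omega

theorem Odd.coprime_sub_one_div_two {p : ℕ} (hp : Odd p) : Nat.Coprime ((p - 1) / 2) p := by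
  obtain ⟨t, rfl⟩ := hp
  rw [show (2 * t + 1 - 1) / 2 = t by omega, Nat.coprime_mul_right_add_right]
  exact Nat.coprime_one_right t

theorem Nat.eq_of_mul_add_mod_eq {p c q q' b : ℕ} (hc : c.Coprime p) (hq : q < p) (hq' : q' < p)
    (h : (c * q + b) % p = (c * q' + b) % p) : q = q' :=
  ((Nat.ModEq.add_right_cancel' b h).cancel_left_of_coprime hc.symm).eq_of_lt_of_lt hq hq'

/-- Lemma 2: if k ≠ k' give the same crossing label (L_k = L_{k'} and
n_k = n_{k'}), then their remainders mod p-3 sum to p-4. -/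
theorem remainders_sum (p : ℕ) (hodd : Odd p) (hp : 5 ≤ p)
    (L : ℕ → ℕ) (hL : ∀ k, L k = min (k % (p - 3)) ((p - 4) - k % (p - 3)))
    (a : ℕ → ℕ)
    (ha : ∀ k, a k = if k % (p - 3) < (p - 3) / 2 then 0
      else (k % (p - 3)) - (p - 3) / 2 + 1)
    (n : ℕ → ℕ)
    (hn : ∀ k, n k = ((p - 1) / 2 * (k / (p - 3)) + a k) % p + 1)
    (k k' : ℕ) (hk : k < p * (p - 3)) (hk' : k' < p * (p - 3))
    (hne : k ≠ k') (hLeq : L k = L k') (hneq : n k = n k') :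
    k % (p - 3) + k' % (p - 3) = p - 4 := by
  have hm : 0 < p - 3 := by omega
  have hr : k % (p - 3) ≤ p - 4 := by have := Nat.mod_lt k hm; omega
  have hr' : k' % (p - 3) ≤ p - 4 := by have := Nat.mod_lt k' hm; omega
  rw [hL, hL] at hLeq
  refine (Nat.eq_or_add_eq_of_min_tsub_eq hr hr' hLeq).resolve_left fun hmod => hne ?_
  have haeq : a k = a k' := by rw [ha, ha, hmod]
  rw [hn, hn, haeq] at hneq
  have hdiv : k / (p - 3) = k' / (p - 3) :=
    Nat.eq_of_mul_add_mod_eq hodd.coprime_sub_one_div_two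
      (Nat.div_lt_of_lt_mul (mul_comm p _ ▸ hk)) (Nat.div_lt_of_lt_mul (mul_comm p _ ▸ hk'))
      (Nat.add_right_cancel hneq)
  exact Nat.ext_div_modEq hdiv hmod
end

section
/- Let M be an n × n integer matrix whose rows each sum to 0 and whose columns each sum to 0. Then all first minors of M obtained by deleting row i and column j have the same absolute value, up to sign determined by (-1)^{i+j}; in particular det M = 0 for n ≥ 2. -/
/-!
If the columns of `M` sum to zero, so do the rows of the `(n+1) × n` matrix left after deleting a
column; the minors obtained from it by deleting row `i`, weighted by `(-1)^i`, are then all equal.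
Transposing, the same holds for deleted columns when the rows of `M` sum to zero. Changing first
the deleted row and then the deleted column shows that all cofactors agree. The determinant
vanishes because the rows of `M` add up to the zero row.
-/

theorem neg_one_pow_mul_negOnePow_sub_smul {R : Type*} [CommRing R] (a b : ℕ) (d : R) :
    (-1 : R) ^ a * (((a : ℤ) - b).negOnePow • d) = (-1) ^ b * d := by
  rw [Int.negOnePow_sub, mul_smul, Units.smul_def, Units.smul_def, ← Int.cast_smul_eq_zsmul R,
    ← Int.cast_smul_eq_zsmul R, Int.cast_negOnePow_natCast, Int.cast_negOnePow_natCast,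
    smul_eq_mul, smul_eq_mul, ← mul_assoc, ← mul_pow, neg_one_mul, neg_neg, one_pow, one_mul]

namespace Matrix

variable {R : Type*} [CommRing R] {n : ℕ}

theorem neg_one_pow_mul_det_submatrix_succAbove_row_eq (M : Matrix (Fin (n + 1)) (Fin n) R)
    (hv : ∑ i, M i = 0) (i i' : Fin (n + 1)) :
    (-1 : R) ^ (i : ℕ) * (M.submatrix i.succAbove id).det =
      (-1) ^ (i' : ℕ) * (M.submatrix i'.succAbove id).det := by
  rw [submatrix_succAbove_det_eq_negOnePow_submatrix_succAbove_det M hv i i',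
    neg_one_pow_mul_negOnePow_sub_smul]

theorem neg_one_pow_mul_det_submatrix_succAbove_col_eq (M : Matrix (Fin n) (Fin (n + 1)) R)
    (hv : ∀ i, ∑ j, M i j = 0) (j j' : Fin (n + 1)) :
    (-1 : R) ^ (j : ℕ) * (M.submatrix id j.succAbove).det =
      (-1) ^ (j' : ℕ) * (M.submatrix id j'.succAbove).det := by
  rw [submatrix_succAbove_det_eq_negOnePow_submatrix_succAbove_det' M hv j j',
    neg_one_pow_mul_negOnePow_sub_smul]

theorem neg_one_pow_mul_det_submatrix_succAbove_eq_of_sum_eq_zero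
    (M : Matrix (Fin (n + 1)) (Fin (n + 1)) R)
    (hrow : ∀ i, ∑ j, M i j = 0) (hcol : ∀ j, ∑ i, M i j = 0) (i j i' j' : Fin (n + 1)) :
    (-1 : R) ^ ((i : ℕ) + j) * (M.submatrix i.succAbove j.succAbove).det =
      (-1) ^ ((i' : ℕ) + j') * (M.submatrix i'.succAbove j'.succAbove).det := by
  have hrows : ∀ i i' : Fin (n + 1),
      (-1 : R) ^ (i : ℕ) * (M.submatrix i.succAbove j.succAbove).det =
        (-1) ^ (i' : ℕ) * (M.submatrix i'.succAbove j.succAbove).det :=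
    neg_one_pow_mul_det_submatrix_succAbove_row_eq (M.submatrix id j.succAbove)
      (funext fun b => (Finset.sum_apply b _ _).trans (hcol (j.succAbove b)))
  have hcols : ∀ j j' : Fin (n + 1),
      (-1 : R) ^ (j : ℕ) * (M.submatrix i'.succAbove j.succAbove).det =
        (-1) ^ (j' : ℕ) * (M.submatrix i'.succAbove j'.succAbove).det :=
    neg_one_pow_mul_det_submatrix_succAbove_col_eq (M.submatrix i'.succAbove id)
      fun a => hrow (i'.succAbove a)
  calc (-1 : R) ^ ((i : ℕ) + j) * (M.submatrix i.succAbove j.succAbove).det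
      = (-1) ^ (j : ℕ) * ((-1) ^ (i : ℕ) * (M.submatrix i.succAbove j.succAbove).det) := by ring
    _ = (-1) ^ (j : ℕ) * ((-1) ^ (i' : ℕ) * (M.submatrix i'.succAbove j.succAbove).det) := by
        rw [hrows]
    _ = (-1) ^ (i' : ℕ) * ((-1) ^ (j : ℕ) * (M.submatrix i'.succAbove j.succAbove).det) := by
        ring
    _ = (-1) ^ (i' : ℕ) * ((-1) ^ (j' : ℕ) * (M.submatrix i'.succAbove j'.succAbove).det) := by
        rw [hcols]
    _ = (-1) ^ ((i' : ℕ) + j') * (M.submatrix i'.succAbove j'.succAbove).det := by ring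

theorem det_eq_zero_of_sum_col_eq_zero (M : Matrix (Fin (n + 1)) (Fin (n + 1)) R)
    (hcol : ∀ j, ∑ i, M i j = 0) : M.det = 0 := by
  rw [det_eq_sum_column_mul_submatrix_succAbove_succAbove_det M 0 0 fun j _ => hcol j, hcol,
    mul_zero, zero_mul]

end Matrix

/-- If all row and column sums of an integer matrix vanish, all cofactors
(signed first minors) coincide; in particular det M = 0 for size ≥ 2. -/
theorem cofactors_equal (n : ℕ) (M : Matrix (Fin (n + 1)) (Fin (n + 1)) ℤ)
    (hrow : ∀ i, ∑ j, M i j = 0) (hcol : ∀ j, ∑ i, M i j = 0) :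
    (∀ i j i' j' : Fin (n + 1),
      (-1 : ℤ) ^ ((i : ℕ) + (j : ℕ)) *
        (M.submatrix i.succAbove j.succAbove).det =
      (-1 : ℤ) ^ ((i' : ℕ) + (j' : ℕ)) *
        (M.submatrix i'.succAbove j'.succAbove).det) ∧
    (1 ≤ n → M.det = 0) :=
  ⟨M.neg_one_pow_mul_det_submatrix_succAbove_eq_of_sum_eq_zero hrow hcol,
    fun _ => M.det_eq_zero_of_sum_col_eq_zero hcol⟩
end

section
/- Let p be prime and M the ℤ-coloring matrix of a knot diagram with n crossings. The knot is p-colorable (the solution space of M·x ≡ 0 mod p has dimension at least 2 over Z/pZ) if and only if p divides the first minor of M (the knot determinant), assuming the first minor construction deletes one row and one column and the all-ones vector spans the trivial solutions. -/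
/-!
Reduce mod `p`. Since the rows sum to zero, the all-ones vector lies in the kernel, so the kernel
has dimension at least 2 iff it contains a nonzero vector vanishing at the first coordinate.
Dropping that coordinate identifies such vectors with nonzero kernel vectors of the minor: the
equation of the first row is redundant because the columns sum to zero. Finally, the minor is
singular mod `p` iff `p` divides its determinant.
-/

open Module Matrix

theorem Submodule.two_le_finrank_iff_exists_ne_zero_apply_eq_zero {K ι : Type*} [Field K]
    [Fintype ι] {S : Submodule K (ι → K)} (hS : 1 ∈ S) (i : ι) :
    2 ≤ finrank K S ↔ ∃ v ∈ S, v ≠ 0 ∧ v i = 0 := by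
  constructor
  · intro h
    by_contra! hS0
    have hinj : Function.Injective ((LinearMap.proj i).comp S.subtype) := by
      refine (injective_iff_map_eq_zero _).mpr fun v hv => ?_
      by_contra hv0
      exact hS0 v v.2 (by simpa using hv0) hv
    have := LinearMap.finrank_le_finrank_of_injective hinj
    rw [finrank_self] at this
    omega
  · rintro ⟨v, hvS, hv0, hvi⟩
    have hlt : K ∙ (1 : ι → K) < S := by
      refine SetLike.lt_iff_le_and_exists.mpr
        ⟨(span_singleton_le_iff_mem _ _).mpr hS, v, hvS, fun hv => ?_⟩
      obtain ⟨a, rfl⟩ := mem_span_singleton.mp hv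
      obtain rfl : a = 0 := by simpa using hvi
      exact hv0 (zero_smul _ _)
    have := Submodule.finrank_lt_finrank_of_lt hlt
    rwa [finrank_span_singleton fun h => one_ne_zero (congrFun h i)] at this

namespace Matrix

theorem mulVec_cons_zero_succ {R : Type*} [NonUnitalNonAssocSemiring R] {n : ℕ}
    (N : Matrix (Fin (n + 1)) (Fin (n + 1)) R) (w : Fin n → R) (k : Fin n) :
    (N *ᵥ Fin.cons 0 w) k.succ = (N.submatrix Fin.succ Fin.succ *ᵥ w) k := by
  simp [mulVec, dotProduct, Fin.sum_univ_succ]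

theorem sum_mulVec_eq_zero {R ι : Type*} [Semiring R] [Fintype ι]
    (N : Matrix ι ι R) (hcol : ∀ j, ∑ i, N i j = 0) (v : ι → R) :
    ∑ i, (N *ᵥ v) i = 0 := by
  have h1N : 1 ᵥ* N = 0 := by
    ext j; simpa [vecMul, dotProduct] using hcol j
  rw [← one_dotProduct, dotProduct_mulVec, h1N, zero_dotProduct]

theorem mulVec_cons_zero_eq_zero_iff {R : Type*} [Ring R] {n : ℕ}
    {N : Matrix (Fin (n + 1)) (Fin (n + 1)) R} (hcol : ∀ j, ∑ i, N i j = 0) (w : Fin n → R) :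
    N *ᵥ Fin.cons 0 w = 0 ↔ N.submatrix Fin.succ Fin.succ *ᵥ w = 0 := by
  simp only [funext_iff, ← mulVec_cons_zero_succ, Pi.zero_apply]
  refine ⟨fun h k => h k.succ, fun h => Fin.cases ?_ h⟩
  have := sum_mulVec_eq_zero N hcol (Fin.cons 0 w)
  rwa [Fin.sum_univ_succ, Finset.sum_eq_zero fun k _ => h k, add_zero] at this

theorem two_le_finrank_ker_iff_det_submatrix_succ_eq_zero {K : Type*} [Field K] {n : ℕ}
    {N : Matrix (Fin (n + 1)) (Fin (n + 1)) K}
    (hrow : ∀ i, ∑ j, N i j = 0) (hcol : ∀ j, ∑ i, N i j = 0) :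
    2 ≤ finrank K (LinearMap.ker (toLin' N)) ↔ (N.submatrix Fin.succ Fin.succ).det = 0 := by
  have hone : 1 ∈ LinearMap.ker (toLin' N) := by
    rw [LinearMap.mem_ker, toLin'_apply]
    ext i; simpa [mulVec, dotProduct] using hrow i
  rw [Submodule.two_le_finrank_iff_exists_ne_zero_apply_eq_zero hone 0,
    ← exists_mulVec_eq_zero_iff]
  constructor
  · rintro ⟨v, hv, hv0, hv00⟩
    rw [← Fin.cons_self_tail v, hv00, LinearMap.mem_ker, toLin'_apply,
      mulVec_cons_zero_eq_zero_iff hcol] at hv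
    exact ⟨Fin.tail v, fun h => hv0 (funext (Fin.cases hv00 (congrFun h))), hv⟩
  · rintro ⟨w, hw0, hw⟩
    refine ⟨Fin.cons 0 w, ?_, fun h => hw0 (congrArg Fin.tail h), rfl⟩
    rwa [LinearMap.mem_ker, toLin'_apply, mulVec_cons_zero_eq_zero_iff hcol]

end Matrix

/-- A knot is p-colorable (mod-p kernel of the coloring matrix has dimension
at least 2) iff p divides the first minor (knot determinant). -/
theorem p_colorable_iff_dvd_det (p : ℕ) [Fact p.Prime] (n : ℕ)
    (M : Matrix (Fin (n + 2)) (Fin (n + 2)) ℤ)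
    (hrow : ∀ i, ∑ j, M i j = 0) (hcol : ∀ j, ∑ i, M i j = 0) :
    2 ≤ Module.finrank (ZMod p)
        (LinearMap.ker (Matrix.toLin' (M.map (Int.cast : ℤ → ZMod p)))) ↔
    (p : ℤ) ∣ (M.submatrix Fin.succ Fin.succ).det := by
  have hrow' : ∀ i, ∑ j, M.map (Int.cast : ℤ → ZMod p) i j = 0 := fun i => by
    simpa using congrArg (Int.cast : ℤ → ZMod p) (hrow i)
  have hcol' : ∀ j, ∑ i, M.map (Int.cast : ℤ → ZMod p) i j = 0 := fun j => by
    simpa using congrArg (Int.cast : ℤ → ZMod p) (hcol j)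
  rw [two_le_finrank_ker_iff_det_submatrix_succ_eq_zero hrow' hcol', submatrix_map,
    ← Int.cast_det, ZMod.intCast_zmod_eq_zero_iff_dvd]
end

section
/- Let p ≥ 5 be odd and define the unsigned Gauss code c_k = p·L_k + n_k for 0 ≤ k < p(p-3). For every k, the two occurrences k and k' of a crossing lie in different petal blocks: ⌊k/(p-3)⌋ ≠ ⌊k'/(p-3)⌋. -/
/-!
Within one petal block the index is determined by its residue `r = k % (p - 3)`, so it
suffices to recover `r` from `c k`. Since `1 ≤ n k ≤ p`, the code `c k = p * L k + n k` determines
`L k` and `n k`. In a fixed block `n k - 1` is a fixed shift of `a k` modulo `p`, and `a k < p`,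
so `a k` is determined as well. Finally `(L, a)` determines `r`: on the first half of the block
`a = 0` and `L = r`, on the second half `a = r - (p - 3) / 2 + 1` is injective.
-/

theorem Nat.eq_and_eq_of_mul_add_eq_mul_add {p q r x y : ℕ} (hx : x < p) (hy : y < p)
    (h : p * q + x = p * r + y) : q = r ∧ x = y := by
  have hp : 0 < p := by omega
  have digits : ∀ q x, x < p → (p * q + x) / p = q ∧ (p * q + x) % p = x :=
    fun q x hx => (Nat.div_mod_unique hp).2 ⟨add_comm x (p * q), hx⟩
  obtain ⟨hq, hx'⟩ := digits q x hx
  obtain ⟨hr, hy'⟩ := digits r y hy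
  rw [h] at hq hx'
  exact ⟨hq.symm.trans hr, hx'.symm.trans hy'⟩

theorem Nat.eq_of_add_mod_eq_add_mod {p s x y : ℕ} (hx : x < p) (hy : y < p)
    (h : (s + x) % p = (s + y) % p) : x = y :=
  (Nat.ModEq.add_left_cancel' s h).eq_of_lt_of_lt hx hy

theorem petal_residue_eq {d r r' : ℕ} (hr : r < d) (hr' : r' < d)
    (hL : min r (d - 1 - r) = min r' (d - 1 - r'))
    (ha : (if r < d / 2 then 0 else r - d / 2 + 1) = if r' < d / 2 then 0 else r' - d / 2 + 1) :
    r = r' := by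
  split_ifs at ha <;> omega

theorem different_petal_blocks_general (p : ℕ)
    (L : ℕ → ℕ) (hL : ∀ k, L k = min (k % (p - 3)) ((p - 4) - k % (p - 3)))
    (a : ℕ → ℕ)
    (ha : ∀ k, a k = if k % (p - 3) < (p - 3) / 2 then 0
      else (k % (p - 3)) - (p - 3) / 2 + 1)
    (n : ℕ → ℕ)
    (hn : ∀ k, n k = ((p - 1) / 2 * (k / (p - 3)) + a k) % p + 1)
    (c : ℕ → ℕ) (hc : ∀ k, c k = p * L k + n k)
    (k k' : ℕ) (hk : k < p * (p - 3))
    (hne : k ≠ k') (hceq : c k = c k') :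
    k / (p - 3) ≠ k' / (p - 3) := by
  intro hblock
  have hd : 0 < p - 3 := Nat.pos_of_ne_zero fun h => by simp [h] at hk
  have hp : 0 < p := by omega
  have ha_lt : ∀ j, a j < p := fun j => by
    have := Nat.mod_lt j hd
    rw [ha j]; split_ifs <;> omega
  obtain ⟨hLeq, hmod⟩ := Nat.eq_and_eq_of_mul_add_eq_mul_add (Nat.mod_lt _ hp) (Nat.mod_lt _ hp)
    (by simpa only [hc, hn, ← add_assoc, Nat.add_right_cancel_iff] using hceq)
  rw [hblock] at hmod
  have haeq : a k = a k' := Nat.eq_of_add_mod_eq_add_mod (ha_lt k) (ha_lt k') hmod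
  have hres : k % (p - 3) = k' % (p - 3) := by
    have hsub : p - 4 = p - 3 - 1 := by omega
    rw [hL, hL, hsub] at hLeq
    rw [ha, ha] at haeq
    exact petal_residue_eq (Nat.mod_lt k hd) (Nat.mod_lt k' hd) hLeq haeq
  exact hne (by rw [← Nat.div_add_mod k (p - 3), ← Nat.div_add_mod k' (p - 3), hblock, hres])

/-- The two occurrences of a crossing in the petal unsigned Gauss code lie in
different petal blocks. -/
theorem different_petal_blocks (p : ℕ) (hodd : Odd p) (hp : 5 ≤ p)
    (L : ℕ → ℕ) (hL : ∀ k, L k = min (k % (p - 3)) ((p - 4) - k % (p - 3)))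
    (a : ℕ → ℕ)
    (ha : ∀ k, a k = if k % (p - 3) < (p - 3) / 2 then 0
      else (k % (p - 3)) - (p - 3) / 2 + 1)
    (n : ℕ → ℕ)
    (hn : ∀ k, n k = ((p - 1) / 2 * (k / (p - 3)) + a k) % p + 1)
    (c : ℕ → ℕ) (hc : ∀ k, c k = p * L k + n k)
    (k k' : ℕ) (hk : k < p * (p - 3)) (hk' : k' < p * (p - 3))
    (hne : k ≠ k') (hceq : c k = c k') :
    k / (p - 3) ≠ k' / (p - 3) :=
  different_petal_blocks_general p L hL a ha n hn c hc k k' hk hne hceq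
end
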